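/- arXiv:1811.12163 — 2 statements merged into one kernel-verified Lean document; each statement's English description precedes it below -/
import Mathlib

section
/- In the Milnor-Witt K-theory ring K^MW_*(E), for every unit a ∈ E^×, one has [a]·[a] = [a]·[−1]. -/
/-!  Milnor-Witt K-theory of a field `E`, presented by generators `[a]` (degree 1, `a ∈ Eˣ`)
and `η` (degree −1), with relations
`[a][1−a] = 0` (for `a ≠ 1`), `[ab] = [a] + [b] + η[a][b]`, `η[a] = [a]η`, `η(η[−1]+2) = 0`. -/

/-- Generators of Milnor-Witt K-theory: symbols `[a]` for units `a`, and `η`. -/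
inductive MWGen (E : Type) [Field E] : Type
  | sym : Eˣ → MWGen E
  | eta : MWGen E

namespace MWK

variable (E : Type) [Field E]

/-- The element `[a]` in the free algebra. -/
noncomputable def S (a : Eˣ) : FreeAlgebra ℤ (MWGen E) := FreeAlgebra.ι ℤ (MWGen.sym a)

/-- The element `η` in the free algebra. -/
noncomputable def H : FreeAlgebra ℤ (MWGen E) := FreeAlgebra.ι ℤ MWGen.eta

/-- The defining relations of Milnor-Witt K-theory. -/
inductive Rel : FreeAlgebra ℤ (MWGen E) → FreeAlgebra ℤ (MWGen E) → Prop
  | steinberg (a : Eˣ) (ha : (a : E) ≠ 1) :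
      Rel (S E a * S E (Units.mk0 (1 - (a : E)) (sub_ne_zero_of_ne (Ne.symm ha)))) 0
  | mul_symbol (a b : Eˣ) : Rel (S E (a * b)) (S E a + S E b + H E * S E a * S E b)
  | eta_comm (a : Eˣ) : Rel (H E * S E a) (S E a * H E)
  | eta_hyp : Rel (H E * (H E * S E (-1) + 2)) 0

end MWK

/-- The Milnor-Witt K-theory ring `K^MW_*(E)` of a field `E`. -/
noncomputable def KMW (E : Type) [Field E] : Type := RingQuot (MWK.Rel E)

noncomputable instance (E : Type) [Field E] : Ring (KMW E) :=
  inferInstanceAs (Ring (RingQuot (MWK.Rel E)))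

namespace KMW

variable {E : Type} [Field E]

/-- The symbol `[a] ∈ K^MW_1(E)`. -/
noncomputable def sym (a : Eˣ) : KMW E := RingQuot.mkRingHom (MWK.Rel E) (MWK.S E a)

/-- The symbol `η ∈ K^MW_{-1}(E)`. -/
noncomputable def eta : KMW E := RingQuot.mkRingHom (MWK.Rel E) (MWK.H E)

/-- The quadratic form `⟨a⟩ = 1 + η[a] ∈ K^MW_0(E)`. -/
noncomputable def form (a : Eˣ) : KMW E := 1 + eta * sym a

/-- `ε = −⟨−1⟩`. -/
noncomputable def eps : KMW E := - form (-1)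

end KMW

/-! From `[ab] = [a] + ⟨a⟩[b] = [a]⟨b⟩ + [b]` and `ηε = η` one gets `[1] = 0` and
`[a⁻¹] = −⟨a⁻¹⟩[a] = −[a]⟨a⁻¹⟩`, so the units `b` with `[a][b] = 0` form a subgroup, and it
does not change when `a` is replaced by `a⁻¹`. Since `−a = (1 − a)/(1 − a⁻¹)`, the Steinberg
relation for `a` and for `a⁻¹` gives `[a][−a] = 0`. Finally `a = (−a)(−1)` yields
`[a][a] = [a][−a]⟨−1⟩ + [a][−1] = [a][−1]`. -/

namespace KMW

variable {E : Type} [Field E]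

lemma sym_mul_sym_of_add_eq_one {a b : Eˣ} (h : (a : E) + b = 1) : sym a * sym b = 0 := by
  have ha : (a : E) ≠ 1 := fun ha => b.ne_zero (by linear_combination h - ha)
  have hb : b = Units.mk0 (1 - (a : E)) (sub_ne_zero_of_ne (Ne.symm ha)) :=
    Units.ext (by simp only [Units.val_mk0]; linear_combination h)
  have hrel := RingQuot.mkRingHom_rel (MWK.Rel.steinberg (E := E) a ha)
  rw [map_mul, map_zero] at hrel
  rw [hb]
  exact hrel

lemma eta_mul_sym (a : Eˣ) : eta * sym a = sym a * eta := by
  have hrel := RingQuot.mkRingHom_rel (MWK.Rel.eta_comm (E := E) a)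
  rwa [map_mul, map_mul] at hrel

lemma sym_mul (a b : Eˣ) : sym (a * b) = sym a + form a * sym b := by
  have hrel := RingQuot.mkRingHom_rel (MWK.Rel.mul_symbol (E := E) a b)
  simp only [map_mul, map_add] at hrel
  rw [form, add_mul, one_mul, ← add_assoc]
  exact hrel

lemma sym_mul' (a b : Eˣ) : sym (a * b) = sym a * form b + sym b := by
  rw [sym_mul, form, form, add_mul, mul_add, one_mul, mul_one, eta_mul_sym a, mul_assoc]
  abel

lemma eta_mul_eps : eta * eps = (eta : KMW E) := by
  have hrel : eta * (eta * sym (-1) + 2) = (0 : KMW E) := by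
    have h := RingQuot.mkRingHom_rel (MWK.Rel.eta_hyp (E := E))
    simp only [map_mul, map_add, map_ofNat, map_zero] at h
    exact h
  rw [eps, form, ← sub_eq_zero, ← neg_eq_zero, ← hrel]
  noncomm_ring

lemma form_mul_sym_one (a : Eˣ) : form a * sym 1 = (0 : KMW E) := by
  have h := sym_mul (E := E) a 1
  rwa [mul_one, left_eq_add] at h

lemma eta_mul_sym_one : eta * sym 1 = (0 : KMW E) :=
  calc eta * sym 1 = eta * eps * sym 1 := by rw [eta_mul_eps]
    _ = -(eta * (form (-1) * sym 1)) := by rw [eps, mul_neg, neg_mul, mul_assoc]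
    _ = 0 := by rw [form_mul_sym_one, mul_zero, neg_zero]

lemma sym_one : sym 1 = (0 : KMW E) := by
  have h := form_mul_sym_one (E := E) 1
  rwa [form, add_mul, one_mul, eta_mul_sym_one, zero_mul, add_zero] at h

lemma sym_inv (a : Eˣ) : sym a⁻¹ = -(form a⁻¹ * sym a) := by
  have h := sym_mul a⁻¹ a
  rw [inv_mul_cancel, sym_one] at h
  exact eq_neg_of_add_eq_zero_left h.symm

lemma sym_inv' (a : Eˣ) : sym a⁻¹ = -(sym a * form a⁻¹) := by
  have h := sym_mul' a a⁻¹
  rw [mul_inv_cancel, sym_one] at h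
  exact eq_neg_of_add_eq_zero_right h.symm

lemma sym_inv_mul_sym_eq_zero {a b : Eˣ} (h : sym a * sym b = 0) :
    sym a⁻¹ * sym b = 0 := by
  rw [sym_inv, neg_mul, mul_assoc, h, mul_zero, neg_zero]

lemma sym_mul_sym_inv_eq_zero {a b : Eˣ} (h : sym a * sym b = 0) :
    sym a * sym b⁻¹ = 0 := by
  rw [sym_inv', mul_neg, ← mul_assoc, h, zero_mul, neg_zero]

lemma sym_mul_sym_mul_eq_zero {a b c : Eˣ} (hb : sym a * sym b = 0)
    (hc : sym a * sym c = 0) : sym a * sym (b * c) = 0 := by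
  rw [sym_mul', mul_add, ← mul_assoc, hb, hc, zero_mul, add_zero]

lemma sym_mul_sym_neg (a : Eˣ) : sym a * sym (-a) = 0 := by
  by_cases ha : (a : E) = 1
  · rw [Units.val_eq_one.mp ha, sym_one, zero_mul]
  have ha_inv : (a : E)⁻¹ ≠ 1 := inv_ne_one.mpr ha
  let u := Units.mk0 (1 - (a : E)) (sub_ne_zero_of_ne (Ne.symm ha))
  let v := Units.mk0 (1 - (a : E)⁻¹) (sub_ne_zero_of_ne (Ne.symm ha_inv))
  have hu : sym a * sym u = 0 := sym_mul_sym_of_add_eq_one (by simp [u])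
  have hv : sym a * sym v = 0 := by
    have hv_inv : sym a⁻¹ * sym v = 0 := sym_mul_sym_of_add_eq_one (by simp [v])
    simpa using sym_inv_mul_sym_eq_zero hv_inv
  have hneg : -a = u * v⁻¹ := by
    have ha0 : (a : E) ≠ 0 := a.ne_zero
    have hsub : (a : E) - 1 ≠ 0 := sub_ne_zero_of_ne ha
    ext
    simp only [Units.val_neg, Units.val_mul, Units.val_inv_eq_inv_val, Units.val_mk0, u, v]
    field_simp
    ring
  rw [hneg]
  exact sym_mul_sym_mul_eq_zero hu (sym_mul_sym_inv_eq_zero hv)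

end KMW

/-- In `K^MW_*(E)`, for every unit `a`, `[a]·[a] = [a]·[−1]`. -/
theorem kmw_symbol_sq (E : Type) [Field E] (a : Eˣ) :
    KMW.sym a * KMW.sym a = KMW.sym a * KMW.sym (-1) :=
  calc KMW.sym a * KMW.sym a = KMW.sym a * KMW.sym (-a * -1) := by rw [neg_mul_neg, mul_one]
    _ = KMW.sym a * KMW.sym (-a) * KMW.form (-1) + KMW.sym a * KMW.sym (-1) := by
      rw [KMW.sym_mul', mul_add, mul_assoc]
    _ = KMW.sym a * KMW.sym (-1) := by rw [KMW.sym_mul_sym_neg, zero_mul, zero_add]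
end

section
/- Let M be a Milnor-Witt cycle module over a perfect field k, X a scheme with virtual bundle 𝒱_X, and (Z, i, X, j, U) a boundary triple (Z closed in X with open complement U). Then there is a long exact sequence of Chow-Witt groups with coefficients: ⋯ → A_p(Z,M,𝒱_Z) → A_p(X,M,𝒱_X) → A_p(U,M,𝒱_U) → A_{p−1}(Z,M,𝒱_Z) → ⋯, induced by i_*, j^*, and the boundary map ∂^U_Z. -/
/-!  STATEMENT 15.  For a Milnor-Witt cycle module `M` over a perfect field `k`, a scheme
`X` with virtual bundle `𝒱_X` and a boundary triple `(Z, i, X, j, U)`, there is a long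
exact sequence of Chow-Witt groups with coefficients
`⋯ → A_p(Z,M,𝒱_Z) → A_p(X,M,𝒱_X) → A_p(U,M,𝒱_U) → A_{p−1}(Z,M,𝒱_Z) → ⋯`
induced by `i_*`, `j^*` and the boundary map `∂^U_Z`.

Formalization.  The cycle complexes of `Z` and `U` are ℤ-graded complexes `CZ`, `CU`
with differentials `dZ`, `dU`; the boundary map `∂^U_Z` is a family
`bd : CU p →+ CZ (p−1)` satisfying `d_Z ∘ ∂ = − ∂ ∘ d_U`.  The cycle complex of `X`
decomposes as `C_p(X) = C_p(Z) ⊕ C_p(U)` with differential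
`(z, u) ↦ (d_Z z + ∂ u, d_U u)`.  `Hmlgy` is the homology of such a complex, and the
conclusion asserts the existence of maps `iH` (induced by `i_*`), `jH` (induced by `j^*`)
and `δ` (induced by `∂^U_Z`), characterized on classes of cycles, forming an exact
sequence at every spot. -/

/-- Homology at spot `p` of a ℤ-graded complex `(C, d)`. -/
noncomputable def Hmlgy (C : ℤ → Type) [∀ p, AddCommGroup (C p)]
    (d : ∀ p q : ℤ, q + 1 = p → (C p →+ C q)) (p : ℤ) : Type :=
  (d p (p - 1) (sub_add_cancel p 1)).ker ⧸
    ((d (p + 1) p rfl).range.addSubgroupOf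
      (d p (p - 1) (sub_add_cancel p 1)).ker)

noncomputable instance (C : ℤ → Type) [∀ p, AddCommGroup (C p)]
    (d : ∀ p q : ℤ, q + 1 = p → (C p →+ C q)) (p : ℤ) : AddCommGroup (Hmlgy C d p) :=
  inferInstanceAs (AddCommGroup (_ ⧸ _))

/-- The class in homology of a cycle (an element of the kernel of the differential). -/
noncomputable def HmlgyMk (C : ℤ → Type) [∀ p, AddCommGroup (C p)]
    (d : ∀ p q : ℤ, q + 1 = p → (C p →+ C q)) (p : ℤ)
    (x : C p) (hx : x ∈ (d p (p - 1) (by omega)).ker) : Hmlgy C d p :=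
  QuotientAddGroup.mk (⟨x, hx⟩ : (d p (p - 1) (by omega : (p - 1) + 1 = p)).ker)

/-- The differential of the complex `C_*(X) = C_*(Z) ⊕ C_*(U)`:
`(z, u) ↦ (d_Z z + ∂ u, d_U u)`. -/
noncomputable def dXmap (CZ CU : ℤ → Type)
    [∀ p, AddCommGroup (CZ p)] [∀ p, AddCommGroup (CU p)]
    (dZ : ∀ p q : ℤ, q + 1 = p → (CZ p →+ CZ q))
    (dU : ∀ p q : ℤ, q + 1 = p → (CU p →+ CU q))
    (bd : ∀ p q : ℤ, q + 1 = p → (CU p →+ CZ q)) :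
    ∀ p q : ℤ, q + 1 = p → (CZ p × CU p →+ CZ q × CU q) := fun p q h =>
  AddMonoidHom.prod
    ((dZ p q h).comp (AddMonoidHom.fst _ _) + (bd p q h).comp (AddMonoidHom.snd _ _))
    ((dU p q h).comp (AddMonoidHom.snd _ _))

namespace Hmlgy

variable {C C' C'' : ℤ → Type} [∀ p, AddCommGroup (C p)] [∀ p, AddCommGroup (C' p)]
  [∀ p, AddCommGroup (C'' p)]

def IsBoundary (d : ∀ p q : ℤ, q + 1 = p → (C p →+ C q)) (q : ℤ) (x : C q) : Prop :=
  x ∈ (d (q + 1) q rfl).range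

/-- Lets a boundary be witnessed in `C p` for any `p = q + 1`, avoiding casts from `C (q + 1)`. -/
theorem isBoundary_iff {d : ∀ p q : ℤ, q + 1 = p → (C p →+ C q)} {p q : ℤ} (h : q + 1 = p)
    {x : C q} : IsBoundary d q x ↔ ∃ y : C p, d p q h y = x := by
  subst h
  rfl

theorem isBoundary_zero (d : ∀ p q : ℤ, q + 1 = p → (C p →+ C q)) (q : ℤ) :
    IsBoundary d q 0 :=
  zero_mem _

theorem mk_surjective (d : ∀ p q : ℤ, q + 1 = p → (C p →+ C q)) (p : ℤ) (y : Hmlgy C d p) :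
    ∃ x hx, HmlgyMk C d p x hx = y := by
  obtain ⟨⟨x, hx⟩, rfl⟩ := QuotientAddGroup.mk_surjective y
  exact ⟨x, hx, rfl⟩

theorem mk_eq_zero_iff {d : ∀ p q : ℤ, q + 1 = p → (C p →+ C q)} {p : ℤ} {x : C p}
    (hx : x ∈ (d p (p - 1) (sub_add_cancel p 1)).ker) :
    HmlgyMk C d p x hx = 0 ↔ IsBoundary d p x :=
  (QuotientAddGroup.eq_zero_iff _).trans AddSubgroup.mem_addSubgroupOf

theorem mk_sub {d : ∀ p q : ℤ, q + 1 = p → (C p →+ C q)} {p : ℤ} {x y : C p}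
    (hx : x ∈ (d p (p - 1) (sub_add_cancel p 1)).ker)
    (hy : y ∈ (d p (p - 1) (sub_add_cancel p 1)).ker) :
    HmlgyMk C d p (x - y) (sub_mem hx hy) = HmlgyMk C d p x hx - HmlgyMk C d p y hy :=
  rfl

noncomputable def map (d : ∀ p q : ℤ, q + 1 = p → (C p →+ C q))
    (d' : ∀ p q : ℤ, q + 1 = p → (C' p →+ C' q)) (p q : ℤ) (f : C p →+ C' q)
    (hcycle : ∀ x ∈ (d p (p - 1) (sub_add_cancel p 1)).ker,
      f x ∈ (d' q (q - 1) (sub_add_cancel q 1)).ker)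
    (hboundary : ∀ x : C (p + 1), IsBoundary d' q (f (d (p + 1) p rfl x))) :
    Hmlgy C d p →+ Hmlgy C' d' q :=
  QuotientAddGroup.map _ _
    ((f.domRestrict _).codRestrict _ fun x => hcycle x x.2)
    (fun x hx => by
      obtain ⟨y, hy⟩ := AddSubgroup.mem_addSubgroupOf.mp hx
      exact show IsBoundary d' q (f x) from hy ▸ hboundary y)

theorem map_mk {d : ∀ p q : ℤ, q + 1 = p → (C p →+ C q)}
    {d' : ∀ p q : ℤ, q + 1 = p → (C' p →+ C' q)} {p q : ℤ} {f : C p →+ C' q}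
    {hcycle hboundary} {x : C p} (hx : x ∈ (d p (p - 1) (sub_add_cancel p 1)).ker) :
    map d d' p q f hcycle hboundary (HmlgyMk C d p x hx) = HmlgyMk C' d' q (f x) (hcycle x hx) :=
  rfl

theorem exact_map {d : ∀ p q : ℤ, q + 1 = p → (C p →+ C q)}
    {d' : ∀ p q : ℤ, q + 1 = p → (C' p →+ C' q)}
    {d'' : ∀ p q : ℤ, q + 1 = p → (C'' p →+ C'' q)} {p q r : ℤ}
    {f : C p →+ C' q} {g : C' q →+ C'' r} {hf hf' hg hg'}
    (hcomp : ∀ x ∈ (d p (p - 1) (sub_add_cancel p 1)).ker, IsBoundary d'' r (g (f x)))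
    (hexact : ∀ y ∈ (d' q (q - 1) (sub_add_cancel q 1)).ker, IsBoundary d'' r (g y) →
      ∃ x ∈ (d p (p - 1) (sub_add_cancel p 1)).ker, IsBoundary d' q (f x - y)) :
    Function.Exact (map d d' p q f hf hf') (map d' d'' q r g hg hg') := by
  intro Y
  constructor
  · obtain ⟨y, hy, rfl⟩ := mk_surjective d' q Y
    rw [map_mk, mk_eq_zero_iff]
    intro hgy
    obtain ⟨x, hx, hxy⟩ := hexact y hy hgy
    refine ⟨HmlgyMk C d p x hx, ?_⟩
    rw [map_mk, ← sub_eq_zero, ← mk_sub, mk_eq_zero_iff]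
    exact hxy
  · rintro ⟨X, rfl⟩
    obtain ⟨x, hx, rfl⟩ := mk_surjective d p X
    rw [map_mk, map_mk, mk_eq_zero_iff]
    exact hcomp x hx

end Hmlgy

section Localization

open Hmlgy

variable {CZ CU : ℤ → Type} [∀ p, AddCommGroup (CZ p)] [∀ p, AddCommGroup (CU p)]
  {dZ : ∀ p q : ℤ, q + 1 = p → (CZ p →+ CZ q)} {dU : ∀ p q : ℤ, q + 1 = p → (CU p →+ CU q)}
  {bd : ∀ p q : ℤ, q + 1 = p → (CU p →+ CZ q)}

@[simp]
theorem dXmap_apply {p q : ℤ} (h : q + 1 = p) (x : CZ p × CU p) :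
    dXmap CZ CU dZ dU bd p q h x = (dZ p q h x.1 + bd p q h x.2, dU p q h x.2) :=
  rfl

variable (dZ dU bd)

noncomputable def homologyInl (p : ℤ) :
    Hmlgy CZ dZ p →+ Hmlgy (fun p => CZ p × CU p) (dXmap CZ CU dZ dU bd) p :=
  map dZ _ p p (AddMonoidHom.inl (CZ p) (CU p))
    (fun z hz => by simpa using hz)
    (fun z => ⟨(z, 0), by simp⟩)

noncomputable def homologySnd (p : ℤ) :
    Hmlgy (fun p => CZ p × CU p) (dXmap CZ CU dZ dU bd) p →+ Hmlgy CU dU p :=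
  map _ dU p p (AddMonoidHom.snd (CZ p) (CU p))
    (fun _ hx => congrArg Prod.snd hx)
    (fun x => ⟨x.2, rfl⟩)

variable {dZ dU bd}

noncomputable def homologyBoundary
    (hanti : ∀ (p q r : ℤ) (h : q + 1 = p) (h' : r + 1 = q) (x : CU p),
      dZ q r h' (bd p q h x) = - bd q r h' (dU p q h x)) (p : ℤ) :
    Hmlgy CU dU p →+ Hmlgy CZ dZ (p - 1) :=
  map dU dZ p (p - 1) (bd p (p - 1) (sub_add_cancel p 1))
    (fun u hu => by
      rw [AddMonoidHom.mem_ker] at hu ⊢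
      rw [hanti, hu, map_zero, neg_zero])
    (fun u => (isBoundary_iff (sub_add_cancel p 1)).mpr
      ⟨-bd (p + 1) p rfl u, by rw [map_neg, hanti, neg_neg]⟩)

theorem exact_homologyInl_homologySnd
    (hanti : ∀ (p q r : ℤ) (h : q + 1 = p) (h' : r + 1 = q) (x : CU p),
      dZ q r h' (bd p q h x) = - bd q r h' (dU p q h x)) (p : ℤ) :
    Function.Exact (homologyInl dZ dU bd p) (homologySnd dZ dU bd p) := by
  refine exact_map (fun _ _ => isBoundary_zero dU p) ?_
  rintro ⟨z, u⟩ hzu ⟨v, rfl⟩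
  simp only [AddMonoidHom.mem_ker, dXmap_apply, Prod.mk_eq_zero] at hzu
  refine ⟨z - bd (p + 1) p rfl v, ?_, ⟨(0, -v), ?_⟩⟩
  · rw [AddMonoidHom.mem_ker, map_sub, hanti, sub_neg_eq_add, hzu.1]
  · simp

variable (hanti : ∀ (p q r : ℤ) (h : q + 1 = p) (h' : r + 1 = q) (x : CU p),
  dZ q r h' (bd p q h x) = - bd q r h' (dU p q h x))

theorem exact_homologySnd_homologyBoundary (p : ℤ) :
    Function.Exact (homologySnd dZ dU bd p) (homologyBoundary hanti p) := by
  refine exact_map (fun ⟨z, u⟩ hzu => ?_) (fun u hu hbu => ?_)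
  · simp only [AddMonoidHom.mem_ker, dXmap_apply, Prod.mk_eq_zero] at hzu
    exact (isBoundary_iff (sub_add_cancel p 1)).mpr
      ⟨-z, by rw [map_neg, neg_eq_iff_eq_neg, ← add_eq_zero_iff_eq_neg]; exact hzu.1⟩
  · obtain ⟨w, hw⟩ := (isBoundary_iff (sub_add_cancel p 1)).mp hbu
    refine ⟨(-w, u), ?_, by simpa using isBoundary_zero dU p⟩
    simpa [hw] using hu

theorem exact_homologyBoundary_homologyInl (p : ℤ) :
    Function.Exact (homologyBoundary hanti p) (homologyInl dZ dU bd (p - 1)) := by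
  refine exact_map (fun u hu => ?_) (fun z _ hz0 => ?_)
  · exact (isBoundary_iff (sub_add_cancel p 1)).mpr ⟨(0, u), by simpa using hu⟩
  · obtain ⟨⟨z', u'⟩, hzu'⟩ := (isBoundary_iff (sub_add_cancel p 1)).mp hz0
    simp only [dXmap_apply, AddMonoidHom.inl_apply, Prod.mk.injEq] at hzu'
    refine ⟨u', hzu'.2, (isBoundary_iff (sub_add_cancel p 1)).mpr ⟨-z', ?_⟩⟩
    rw [map_neg, ← hzu'.1]
    abel

end Localization

theorem localization_long_exact_sequence
    (CZ CU : ℤ → Type) [∀ p, AddCommGroup (CZ p)] [∀ p, AddCommGroup (CU p)]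
    (dZ : ∀ p q : ℤ, q + 1 = p → (CZ p →+ CZ q))
    (dU : ∀ p q : ℤ, q + 1 = p → (CU p →+ CU q))
    (bd : ∀ p q : ℤ, q + 1 = p → (CU p →+ CZ q))
    (hanti : ∀ (p q r : ℤ) (h : q + 1 = p) (h' : r + 1 = q) (x : CU p),
      dZ q r h' (bd p q h x) = - bd q r h' (dU p q h x)) :
    ∃ (iH : ∀ p : ℤ, Hmlgy CZ dZ p →+ Hmlgy (fun p => CZ p × CU p) (dXmap CZ CU dZ dU bd) p)
      (jH : ∀ p : ℤ, Hmlgy (fun p => CZ p × CU p) (dXmap CZ CU dZ dU bd) p →+ Hmlgy CU dU p)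
      (δ : ∀ p : ℤ, Hmlgy CU dU p →+ Hmlgy CZ dZ (p - 1)),
      -- `iH` is induced by `i_* : z ↦ (z, 0)`
      (∀ (p : ℤ) (z : CZ p) (hz : z ∈ (dZ p (p - 1) (by omega)).ker)
          (hz' : (z, (0 : CU p)) ∈
            ((dXmap CZ CU dZ dU bd) p (p - 1) (by omega)).ker),
        iH p (HmlgyMk CZ dZ p z hz) =
          HmlgyMk (fun p => CZ p × CU p) (dXmap CZ CU dZ dU bd) p (z, 0) hz') ∧
      -- `jH` is induced by `j^* : (z, u) ↦ u`
      (∀ (p : ℤ) (z : CZ p) (u : CU p)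
          (hzu : (z, u) ∈ ((dXmap CZ CU dZ dU bd) p (p - 1) (by omega)).ker)
          (hu : u ∈ (dU p (p - 1) (by omega)).ker),
        jH p (HmlgyMk (fun p => CZ p × CU p) (dXmap CZ CU dZ dU bd) p (z, u) hzu) =
          HmlgyMk CU dU p u hu) ∧
      -- `δ` is induced by the boundary map `∂^U_Z`
      (∀ (p : ℤ) (u : CU p) (hu : u ∈ (dU p (p - 1) (by omega)).ker)
          (hbu : bd p (p - 1) (by omega) u ∈
            (dZ (p - 1) (p - 1 - 1) (by omega)).ker),
        δ p (HmlgyMk CU dU p u hu) =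
          HmlgyMk CZ dZ (p - 1) (bd p (p - 1) (by omega) u) hbu) ∧
      -- exactness of the long sequence
      (∀ p : ℤ, Function.Exact (iH p) (jH p)) ∧
      (∀ p : ℤ, Function.Exact (jH p) (δ p)) ∧
      (∀ p : ℤ, Function.Exact (δ p) (iH (p - 1))) :=
  ⟨homologyInl dZ dU bd, homologySnd dZ dU bd, homologyBoundary hanti,
    fun _ _ _ _ => rfl, fun _ _ _ _ _ => rfl, fun _ _ _ _ => rfl,
    exact_homologyInl_homologySnd hanti, exact_homologySnd_homologyBoundary hanti,
    exact_homologyBoundary_homologyInl hanti⟩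
end
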